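/- arXiv:2103.00761 — 5 statements merged into one kernel-verified Lean document; each statement's English description precedes it below -/
import Mathlib

section
/- Let n ≥ 1, let x : Fin n → ℝ satisfy 0 ≤ x i for all i, and let i₀ ∈ Fin n be an index at which x attains its minimum. For any threshold c : ℝ and any clique S of the threshold graph G_c(x) with at least 2 elements, the set S ∪ {i₀} is also a clique of G_c(x). (Hence the clique complex of G_c(x) is the union of a cone with apex i₀ and isolated vertices, so all its Betti numbers βₖ for k > 0 vanish.) -/
/-- The threshold graph `G_c(x)`: distinct vertices `i`, `j` are adjacent
iff `x i * x j ≤ c`. -/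
def thresholdGraph {n : ℕ} (x : Fin n → ℝ) (c : ℝ) : SimpleGraph (Fin n) where
  Adj i j := i ≠ j ∧ x i * x j ≤ c
  symm := by
    constructor
    intro i j h
    exact ⟨h.1.symm, by rw [mul_comm]; exact h.2⟩
  loopless := by
    constructor
    intro i h
    exact h.1 rfl

namespace thresholdGraph

variable {n : ℕ} {x : Fin n → ℝ} {c : ℝ}

theorem adj_of_le {i j k : Fin n} (hxj : 0 ≤ x j) (hik : x i ≤ x k)
    (hkj : (thresholdGraph x c).Adj k j) (hij : i ≠ j) : (thresholdGraph x c).Adj i j :=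
  ⟨hij, (mul_le_mul_of_nonneg_right hik hxj).trans hkj.2⟩

/-- `i₀` borrows the edge `k j` from some other vertex `k` of the clique, which is why `S` must
be nontrivial. -/
theorem isClique_insert_of_le {S : Set (Fin n)} {i₀ : Fin n}
    (hS : (thresholdGraph x c).IsClique S) (hSnt : S.Nontrivial)
    (hx : ∀ j ∈ S, 0 ≤ x j) (hmin : ∀ k ∈ S, x i₀ ≤ x k) :
    (thresholdGraph x c).IsClique (insert i₀ S) := by
  refine SimpleGraph.isClique_insert.2 ⟨hS, fun j hj hne => ?_⟩
  obtain ⟨k, hk, hkj⟩ := hSnt.exists_ne j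
  exact adj_of_le (hx j hj) (hmin k hk) (hS hk hj hkj) hne

end thresholdGraph

theorem stmt_1_general (n : ℕ) (x : Fin n → ℝ) (hx : ∀ i, 0 ≤ x i)
    (i₀ : Fin n) (hmin : ∀ i, x i₀ ≤ x i) (c : ℝ) (S : Set (Fin n))
    (hS : (thresholdGraph x c).IsClique S) (hcard : 2 ≤ S.ncard) :
    (thresholdGraph x c).IsClique (S ∪ {i₀}) := by
  rw [Set.union_singleton]
  exact thresholdGraph.isClique_insert_of_le hS (Set.one_lt_ncard_iff_nontrivial.1 hcard)
    (fun j _ => hx j) (fun k _ => hmin k)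

theorem stmt_1 (n : ℕ) (hn : 1 ≤ n) (x : Fin n → ℝ) (hx : ∀ i, 0 ≤ x i)
    (i₀ : Fin n) (hmin : ∀ i, x i₀ ≤ x i) (c : ℝ) (S : Set (Fin n))
    (hS : (thresholdGraph x c).IsClique S) (hcard : 2 ≤ S.ncard) :
    (thresholdGraph x c).IsClique (S ∪ {i₀}) :=
  stmt_1_general n x hx i₀ hmin c S hS hcard
end

section
/- Let n ≥ 1, let x : Fin n → ℝ satisfy 0 ≤ x i for all i, and let i₁ ∈ Fin n be an index at which x attains its maximum. For any threshold c : ℝ and any clique S of the reverse threshold graph H_c(x) with at least 2 elements, the set S ∪ {i₁} is also a clique of H_c(x). -/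
/-! For nonnegative weights, replacing a neighbour `b` of `a` by a vertex of larger weight only
increases `x a * x b`; since every vertex of a nontrivial clique has a neighbour in it, it is
then adjacent to the maximizer. -/

/-- The reverse threshold graph `H_c(x)`: distinct vertices `i`, `j` are adjacent
iff `x i * x j ≥ c`. -/
def revThresholdGraph {n : ℕ} (x : Fin n → ℝ) (c : ℝ) : SimpleGraph (Fin n) where
  Adj i j := i ≠ j ∧ c ≤ x i * x j
  symm := by
    constructor
    intro i j h
    exact ⟨h.1.symm, by rw [mul_comm]; exact h.2⟩
  loopless := by
    constructor
    intro i h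
    exact h.1 rfl

namespace revThresholdGraph

variable {n : ℕ} {x : Fin n → ℝ} {c : ℝ}

theorem adj_of_adj_of_le {a b d : Fin n} (ha : 0 ≤ x a) (hab : (revThresholdGraph x c).Adj a b)
    (hbd : x b ≤ x d) (had : a ≠ d) : (revThresholdGraph x c).Adj a d :=
  ⟨had, hab.2.trans (mul_le_mul_of_nonneg_left hbd ha)⟩

theorem adj_of_mem_isClique_of_forall_le {S : Set (Fin n)} {i₁ a : Fin n} (hx : ∀ i, 0 ≤ x i)
    (hmax : ∀ i, x i ≤ x i₁) (hS : (revThresholdGraph x c).IsClique S) (hSnt : S.Nontrivial)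
    (ha : a ∈ S) (hne : a ≠ i₁) : (revThresholdGraph x c).Adj a i₁ := by
  obtain ⟨b, hb, hba⟩ := hSnt.exists_ne a
  exact adj_of_adj_of_le (hx a) (hS ha hb hba.symm) (hmax b) hne

theorem isClique_insert_of_forall_le {S : Set (Fin n)} {i₁ : Fin n} (hx : ∀ i, 0 ≤ x i)
    (hmax : ∀ i, x i ≤ x i₁) (hS : (revThresholdGraph x c).IsClique S) (hSnt : S.Nontrivial) :
    (revThresholdGraph x c).IsClique (insert i₁ S) :=
  hS.insert fun _ ha hne ↦ (adj_of_mem_isClique_of_forall_le hx hmax hS hSnt ha hne.symm).symm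

end revThresholdGraph

theorem stmt_3_general (n : ℕ) (x : Fin n → ℝ) (hx : ∀ i, 0 ≤ x i)
    (i₁ : Fin n) (hmax : ∀ i, x i ≤ x i₁) (c : ℝ) (S : Set (Fin n))
    (hS : (revThresholdGraph x c).IsClique S) (hcard : 2 ≤ S.ncard) :
    (revThresholdGraph x c).IsClique (S ∪ {i₁}) := by
  rw [Set.union_singleton]
  exact revThresholdGraph.isClique_insert_of_forall_le hx hmax hS
    (Set.one_lt_ncard_iff_nontrivial_and_finite.1 hcard).1

theorem stmt_3 (n : ℕ) (hn : 1 ≤ n) (x : Fin n → ℝ) (hx : ∀ i, 0 ≤ x i)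
    (i₁ : Fin n) (hmax : ∀ i, x i ≤ x i₁) (c : ℝ) (S : Set (Fin n))
    (hS : (revThresholdGraph x c).IsClique S) (hcard : 2 ≤ S.ncard) :
    (revThresholdGraph x c).IsClique (S ∪ {i₁}) :=
  stmt_3_general n x hx i₁ hmax c S hS hcard
end

section
/- Let x : Fin n → ℝ with x i ≠ 0 for all i, and suppose both B = {i | x i < 0} and R = {i | x i > 0} are nonempty. Let c₀ be the maximum of x i * x j over all pairs with i ∈ B and j ∈ R (so c₀ < 0). Then distinct vertices i, j are adjacent in the threshold graph G_{c₀}(x) if and only if x i and x j have opposite signs; that is, G_{c₀}(x) is the complete bipartite graph with parts B and R. -/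
theorem thresholdGraph_adj_iff_mul_neg {n : ℕ} {x : Fin n → ℝ} {c : ℝ} (hc : c < 0)
    (hcross : ∀ i j, x i < 0 → 0 < x j → x i * x j ≤ c) {i j : Fin n} :
    (thresholdGraph x c).Adj i j ↔ i ≠ j ∧ x i * x j < 0 := by
  refine ⟨fun h => ⟨h.1, h.2.trans_lt hc⟩, fun ⟨hij, hneg⟩ => ⟨hij, ?_⟩⟩
  rcases mul_neg_iff.mp hneg with ⟨hi, hj⟩ | ⟨hi, hj⟩
  · exact mul_comm (x i) (x j) ▸ hcross j i hj hi
  · exact hcross i j hi hj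

theorem stmt_5_general (n : ℕ) (x : Fin n → ℝ) (c₀ : ℝ)
    (hc₀ : IsGreatest {r : ℝ | ∃ i j : Fin n, x i < 0 ∧ 0 < x j ∧ r = x i * x j} c₀) :
    c₀ < 0 ∧
    ∀ i j : Fin n, i ≠ j →
      ((thresholdGraph x c₀).Adj i j ↔ (x i < 0 ∧ 0 < x j) ∨ (0 < x i ∧ x j < 0)) := by
  obtain ⟨⟨a, b, ha, hb, rfl⟩, hcross⟩ := hc₀
  have hc : x a * x b < 0 := mul_neg_of_neg_of_pos ha hb
  refine ⟨hc, fun i j hij => ?_⟩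
  rw [thresholdGraph_adj_iff_mul_neg hc fun i j hi hj => hcross ⟨i, j, hi, hj, rfl⟩,
    and_iff_right hij, mul_neg_iff, or_comm]

theorem stmt_5 (n : ℕ) (x : Fin n → ℝ) (hx : ∀ i, x i ≠ 0)
    (hB : ∃ i, x i < 0) (hR : ∃ i, 0 < x i) (c₀ : ℝ)
    (hc₀ : IsGreatest {r : ℝ | ∃ i j : Fin n, x i < 0 ∧ 0 < x j ∧ r = x i * x j} c₀) :
    c₀ < 0 ∧
    ∀ i j : Fin n, i ≠ j →
      ((thresholdGraph x c₀).Adj i j ↔ (x i < 0 ∧ 0 < x j) ∨ (0 < x i ∧ x j < 0)) :=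
  stmt_5_general n x c₀ hc₀
end

section
/- Let x : Fin n → ℝ with x i ≠ 0 for all i, and suppose both B = {i | x i < 0} and R = {i | x i > 0} are nonempty. Let v ∈ Fin n be an index minimizing |x i|, and fix a threshold c ≤ 0. Then v is adjacent in the reverse threshold graph H_c(x) to every vertex w ≠ v that either has the same sign as x v, or is incident to some crossing edge of H_c(x) (an edge with one endpoint in B and one in R). -/
theorem mul_le_mul_of_abs_le_of_mul_nonpos {α : Type*} [Ring α] [LinearOrder α]
    [IsOrderedRing α] {a b d : α} (hab : |a| ≤ |b|) (hbd : b * d ≤ 0) :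
    b * d ≤ a * d :=
  calc b * d = -|b * d| := by rw [abs_of_nonpos hbd, neg_neg]
    _ = -(|b| * |d|) := by rw [abs_mul]
    _ ≤ -(|a| * |d|) := neg_le_neg (mul_le_mul_of_nonneg_right hab (abs_nonneg d))
    _ = -|a * d| := by rw [abs_mul]
    _ ≤ a * d := neg_abs_le _

namespace revThresholdGraph

variable {n : ℕ} {x : Fin n → ℝ} {c : ℝ}

theorem adj_of_mul_nonneg {i j : Fin n} (hij : i ≠ j) (hc : c ≤ 0) (hx : 0 ≤ x i * x j) :
    (revThresholdGraph x c).Adj i j :=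
  ⟨hij, hc.trans hx⟩

theorem adj_of_abs_le_of_adj_of_mul_nonpos {v w u : Fin n} (hvw : v ≠ w) (hv : |x v| ≤ |x u|)
    (hwu : (revThresholdGraph x c).Adj w u) (hcross : x w * x u ≤ 0) :
    (revThresholdGraph x c).Adj v w := by
  refine ⟨hvw, hwu.2.trans ?_⟩
  rw [mul_comm (x w)] at hcross ⊢
  exact mul_le_mul_of_abs_le_of_mul_nonpos hv hcross

end revThresholdGraph

theorem stmt_12_general (n : ℕ) (x : Fin n → ℝ)
    (v : Fin n) (hv : ∀ i, |x v| ≤ |x i|) (c : ℝ) (hc : c ≤ 0) :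
    ∀ w : Fin n, w ≠ v →
      ((x v < 0 ∧ x w < 0) ∨ (0 < x v ∧ 0 < x w) ∨
        (∃ u, (revThresholdGraph x c).Adj w u ∧
          ((x w < 0 ∧ 0 < x u) ∨ (0 < x w ∧ x u < 0)))) →
      (revThresholdGraph x c).Adj v w := by
  intro w hwv h
  rcases h with hneg | hpos | ⟨u, hwu, hcross⟩
  · exact revThresholdGraph.adj_of_mul_nonneg hwv.symm hc (mul_pos_iff.2 (Or.inr hneg)).le
  · exact revThresholdGraph.adj_of_mul_nonneg hwv.symm hc (mul_pos_iff.2 (Or.inl hpos)).le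
  · exact revThresholdGraph.adj_of_abs_le_of_adj_of_mul_nonpos hwv.symm (hv u) hwu (mul_neg_iff.2 hcross.symm).le

theorem stmt_12 (n : ℕ) (x : Fin n → ℝ) (hx : ∀ i, x i ≠ 0)
    (hB : ∃ i, x i < 0) (hR : ∃ i, 0 < x i)
    (v : Fin n) (hv : ∀ i, |x v| ≤ |x i|) (c : ℝ) (hc : c ≤ 0) :
    ∀ w : Fin n, w ≠ v →
      ((x v < 0 ∧ x w < 0) ∨ (0 < x v ∧ 0 < x w) ∨
        (∃ u, (revThresholdGraph x c).Adj w u ∧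
          ((x w < 0 ∧ 0 < x u) ∨ (0 < x w ∧ x u < 0)))) →
      (revThresholdGraph x c).Adj v w :=
  stmt_12_general n x v hv c hc
end

section
/- Let n ≥ 1, let α : Fin n → ℝ satisfy 0 ≤ α i for all i, and let i₀ ∈ Fin n be an index at which α attains its minimum. For any c : ℝ, consider the simple graph D_c on Fin n in which distinct vertices i and j are adjacent if and only if √(α i ^ 2 + α j ^ 2) ≤ c. Then for any clique S of D_c with at least 2 elements, the set S ∪ {i₀} is also a clique of D_c. (Hence the clique complex of D_c is the union of a cone and isolated vertices, so all Betti numbers βₖ for k > 0 of the distance filtration of an axis simplex vanish.) -/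
/-- The distance filtration graph `D_c` of an axis simplex: distinct vertices
`i`, `j` are adjacent iff `√(α i ^ 2 + α j ^ 2) ≤ c`. -/
def distGraph {n : ℕ} (α : Fin n → ℝ) (c : ℝ) : SimpleGraph (Fin n) where
  Adj i j := i ≠ j ∧ Real.sqrt (α i ^ 2 + α j ^ 2) ≤ c
  symm := by
    constructor
    intro i j h
    exact ⟨h.1.symm, by rw [add_comm]; exact h.2⟩
  loopless := by
    constructor
    intro i h
    exact h.1 rfl

/-! Every edge `ij` of `D_c` gives `√(α i₀ ^ 2 + α j ^ 2) ≤ √(α i ^ 2 + α j ^ 2) ≤ c`, so a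
minimiser `i₀` of `α` inherits all edges at every other vertex. A clique with two vertices
provides an edge at each of its members, hence `i₀` is adjacent to all of them. -/

theorem SimpleGraph.isClique_insert_of_forall_adj_imp_adj {V : Type*} {G : SimpleGraph V}
    {s : Set V} {v : V} (hs : G.IsClique s) (hcard : 1 < s.ncard)
    (hv : ∀ u w, G.Adj u w → v ≠ w → G.Adj v w) : G.IsClique (insert v s) := by
  refine isClique_insert.mpr ⟨hs, fun b hb hvb => ?_⟩
  obtain ⟨u, hu, hub⟩ := Set.exists_ne_of_one_lt_ncard hcard b
  exact hv u b (hs hu hb hub) hvb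

theorem distGraph_adj_of_le {n : ℕ} {α : Fin n → ℝ} {c : ℝ} {i j k : Fin n}
    (hk : 0 ≤ α k) (hki : α k ≤ α i) (hij : (distGraph α c).Adj i j) (hkj : k ≠ j) :
    (distGraph α c).Adj k j := by
  refine ⟨hkj, le_trans (Real.sqrt_le_sqrt ?_) hij.2⟩
  gcongr

theorem stmt_14_general (n : ℕ) (α : Fin n → ℝ) (hα : ∀ i, 0 ≤ α i)
    (i₀ : Fin n) (hmin : ∀ i, α i₀ ≤ α i) (c : ℝ) (S : Set (Fin n))
    (hS : (distGraph α c).IsClique S) (hcard : 2 ≤ S.ncard) :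
    (distGraph α c).IsClique (S ∪ {i₀}) := by
  rw [Set.union_singleton]
  exact SimpleGraph.isClique_insert_of_forall_adj_imp_adj hS hcard fun i _ hij hne =>
    distGraph_adj_of_le (hα i₀) (hmin i) hij hne

theorem stmt_14 (n : ℕ) (hn : 1 ≤ n) (α : Fin n → ℝ) (hα : ∀ i, 0 ≤ α i)
    (i₀ : Fin n) (hmin : ∀ i, α i₀ ≤ α i) (c : ℝ) (S : Set (Fin n))
    (hS : (distGraph α c).IsClique S) (hcard : 2 ≤ S.ncard) :
    (distGraph α c).IsClique (S ∪ {i₀}) :=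
  stmt_14_general n α hα i₀ hmin c S hS hcard
end
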